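/- arXiv:1312.5472 — 2 statements merged into one kernel-verified Lean document; each statement's English description precedes it below -/
import Mathlib

section
/- Assume 𝔽 has at least r elements. Let i ∈ {1, …, r} and let m = (m₁, …, m_r) ∈ Γ be a minimal element, with respect to the componentwise partial order on ℕ^r, of the set {n ∈ Γ : n_i = m_i}. Assume m_i > 0 and that m_j > 0 for some j ≠ i. Then: (a) m − m_i ε_i ∉ Γ; and (b) m_i = min{n ∈ ℕ : n ≥ 1 and (m − m_i ε_i) + n ε_i ∈ Γ}; in particular m_i is a gap at P_i (m_i ∈ ℕ ∖ Γ_{P_i}). -/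
/-- A normalized discrete valuation on `K`, trivial on `𝔽` and with residue field `𝔽`. -/
structure IsDVal (𝔽 K : Type*) [Field 𝔽] [Field K] [Algebra 𝔽 K] (v : K → WithTop ℤ) : Prop where
  map_zero' : v 0 = ⊤
  map_mul' : ∀ f g : K, v (f * g) = v f + v g
  add_ge : ∀ f g : K, min (v f) (v g) ≤ v (f + g)
  ne_top : ∀ f : K, f ≠ 0 → v f ≠ ⊤
  exists_val : ∀ n : ℤ, ∃ f : K, v f = (n : WithTop ℤ)
  trivial_on : ∀ a : 𝔽, a ≠ 0 → v (algebraMap 𝔽 K a) = 0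
  residue : ∀ f : K, 0 ≤ v f → ∃ a : 𝔽, 0 < v (f - algebraMap 𝔽 K a)

/-- The ring `A` of functions regular outside `P₁, …, P_r`. -/
def regA {K : Type*} [Field K] (S : Set (K → WithTop ℤ)) : Set K :=
  {f : K | ∀ w ∈ S, 0 ≤ w f}

/-- The Riemann–Roch space `L(m) = {f ∈ A : v i f ≥ -(m i) for all i}`. -/
def LL (𝔽 : Type*) {K : Type*} [Field 𝔽] [Field K] [Algebra 𝔽 K] {r : ℕ}
    (v : Fin r → K → WithTop ℤ) (hv : ∀ i, IsDVal 𝔽 K (v i))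
    (S : Set (K → WithTop ℤ)) (hS : ∀ w ∈ S, IsDVal 𝔽 K w)
    (m : Fin r → ℤ) : Submodule 𝔽 K where
  carrier := {f : K | f ∈ regA S ∧ ∀ i, ((-(m i) : ℤ) : WithTop ℤ) ≤ v i f}
  zero_mem' := by
    refine ⟨fun w hw => ?_, fun i => ?_⟩
    · rw [(hS w hw).map_zero']; exact le_top
    · rw [(hv i).map_zero']; exact le_top
  add_mem' := by
    rintro f g ⟨hf1, hf2⟩ ⟨hg1, hg2⟩
    refine ⟨fun w hw => ?_, fun i => ?_⟩
    · exact le_trans (le_min (hf1 w hw) (hg1 w hw)) ((hS w hw).add_ge f g)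
    · exact le_trans (le_min (hf2 i) (hg2 i)) ((hv i).add_ge f g)
  smul_mem' := by
    rintro c f ⟨h1, h2⟩
    by_cases hc : c = 0
    · subst hc
      rw [zero_smul]
      refine ⟨fun w hw => ?_, fun i => ?_⟩
      · rw [(hS w hw).map_zero']; exact le_top
      · rw [(hv i).map_zero']; exact le_top
    · rw [Algebra.smul_def c f]
      refine ⟨fun w hw => ?_, fun i => ?_⟩
      · rw [(hS w hw).map_mul', (hS w hw).trivial_on c hc, zero_add]
        exact h1 w hw
      · rw [(hv i).map_mul', (hv i).trivial_on c hc, zero_add]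
        exact h2 i

/-- The Weierstraß semigroup `Γ` of `P₁, …, P_r`. -/
def Gamma {K : Type*} [Field K] {r : ℕ} (v : Fin r → K → WithTop ℤ)
    (S : Set (K → WithTop ℤ)) : Set (Fin r → ℕ) :=
  {m | ∃ f : K, f ≠ 0 ∧ f ∈ regA S ∧ ∀ i, v i f = ((-(m i : ℤ) : ℤ) : WithTop ℤ)}

/-- The Weierstraß semigroup `Γ_{P_i}` of the single point `P_i`. -/
def GammaP {K : Type*} [Field K] {r : ℕ} (v : Fin r → K → WithTop ℤ)
    (S : Set (K → WithTop ℤ)) (i : Fin r) : Set ℕ :=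
  {k | ∃ f : K, f ≠ 0 ∧ f ∈ regA S ∧ v i f = ((-(k : ℤ) : ℤ) : WithTop ℤ) ∧
        ∀ j, j ≠ i → 0 ≤ v j f}

section Helpers

variable {𝔽 K : Type*} [Field 𝔽] [Field K] [Algebra 𝔽 K] {v : K → WithTop ℤ}

namespace IsDVal

lemma val_one (hd : IsDVal 𝔽 K v) : v 1 = 0 := by
  have h := hd.trivial_on 1 one_ne_zero
  rwa [map_one] at h

lemma val_algebraMap_nonneg (hd : IsDVal 𝔽 K v) (a : 𝔽) : 0 ≤ v (algebraMap 𝔽 K a) := by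
  by_cases ha : a = 0
  · subst ha; rw [map_zero, hd.map_zero']; exact le_top
  · rw [hd.trivial_on a ha]

lemma val_neg (hd : IsDVal 𝔽 K v) (f : K) : v (-f) = v f := by
  have h1 : v (algebraMap 𝔽 K (-1 : 𝔽)) = 0 := hd.trivial_on _ (by norm_num)
  have h2 : -f = algebraMap 𝔽 K (-1 : 𝔽) * f := by rw [map_neg, map_one]; ring
  rw [h2, hd.map_mul', h1, zero_add]

lemma sub_ge (hd : IsDVal 𝔽 K v) (f g : K) : min (v f) (v g) ≤ v (f - g) := by
  have h := hd.add_ge f (-g)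
  rwa [hd.val_neg, ← sub_eq_add_neg] at h

lemma add_eq_right (hd : IsDVal 𝔽 K v) {f g : K} (h : v g < v f) : v (f + g) = v g := by
  refine le_antisymm ?_ (le_trans (le_min h.le le_rfl) (hd.add_ge f g))
  by_contra hlt
  push_neg at hlt
  have h3 : f + g - f = g := by ring
  have h2 : min (v (f + g)) (v f) ≤ v g := by
    have h4 := hd.sub_ge (f + g) f
    rwa [h3] at h4
  rcases min_le_iff.mp h2 with h4 | h4
  · exact absurd h4 (not_le.mpr hlt)
  · exact absurd h4 (not_le.mpr h)

lemma ne_zero_of_val_eq (hd : IsDVal 𝔽 K v) {f : K} {z : ℤ}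
    (h : v f = (z : WithTop ℤ)) : f ≠ 0 := by
  intro h0
  rw [h0, hd.map_zero'] at h
  exact WithTop.top_ne_coe h

lemma val_smul (hd : IsDVal 𝔽 K v) {a : 𝔽} (ha : a ≠ 0) (f : K) :
    v (algebraMap 𝔽 K a * f) = v f := by
  rw [hd.map_mul', hd.trivial_on a ha, zero_add]

lemma residue' (hd : IsDVal 𝔽 K v) {f : K} (h : v f = 0) :
    ∃ a : 𝔽, a ≠ 0 ∧ 0 < v (f - algebraMap 𝔽 K a) := by
  obtain ⟨a, ha⟩ := hd.residue f h.ge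
  refine ⟨a, ?_, ha⟩
  intro h0
  rw [h0, map_zero, sub_zero, h] at ha
  exact lt_irrefl _ ha

lemma val_inv (hd : IsDVal 𝔽 K v) {f : K} {z : ℤ} (h : v f = (z : WithTop ℤ)) :
    v f⁻¹ = ((-z : ℤ) : WithTop ℤ) := by
  have hf : f ≠ 0 := hd.ne_zero_of_val_eq h
  have h1 : v (f * f⁻¹) = 0 := by rw [mul_inv_cancel₀ hf, hd.val_one]
  rw [hd.map_mul', h] at h1
  obtain ⟨w, hw⟩ := WithTop.ne_top_iff_exists.mp (hd.ne_top _ (inv_ne_zero hf))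
  rw [← hw] at h1 ⊢
  rw [← WithTop.coe_add] at h1
  have h2 : z + w = 0 := by exact_mod_cast h1
  congr 1
  omega

end IsDVal

lemma withtop_lt_add_left {a : WithTop ℤ} (ha : 0 < a) (c : ℤ) :
    (c : WithTop ℤ) < a + (c : WithTop ℤ) := by
  rcases eq_or_ne a ⊤ with rfl | hne
  · simp
  · obtain ⟨z, hz⟩ := WithTop.ne_top_iff_exists.mp hne
    rw [← hz, ← WithTop.coe_add, WithTop.coe_lt_coe]
    have h0 : (0 : ℤ) < z := by rw [← hz] at ha; exact_mod_cast ha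
    omega

lemma exists_avoid {𝔽 : Type*} [Field 𝔽] {r : ℕ} (hcard : (r : Cardinal) ≤ Cardinal.mk 𝔽)
    (i : Fin r) (bad : Fin r → 𝔽) : ∃ b : 𝔽, ∀ j, j ≠ i → b ≠ bad j := by
  classical
  by_contra hcon
  push_neg at hcon
  have hsub : (Set.univ : Set 𝔽) ⊆ ↑((Finset.univ.erase i).image bad) := by
    intro b _
    obtain ⟨j, hj, he⟩ := hcon b
    simp only [Finset.coe_image, Set.mem_image, Finset.mem_coe, Finset.mem_erase]
    exact ⟨j, ⟨hj, Finset.mem_univ j⟩, he.symm⟩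
  have h1 : Cardinal.mk 𝔽 ≤ (((Finset.univ.erase i).image bad).card : Cardinal) := by
    calc Cardinal.mk 𝔽 = Cardinal.mk (Set.univ : Set 𝔽) := Cardinal.mk_univ.symm
      _ ≤ Cardinal.mk (((Finset.univ.erase i).image bad : Finset 𝔽) : Set 𝔽) :=
          Cardinal.mk_le_mk_of_subset hsub
      _ = (((Finset.univ.erase i).image bad).card : Cardinal) := Cardinal.mk_coe_finset
  have h2 : ((Finset.univ.erase i).image bad).card ≤ r - 1 := by
    calc ((Finset.univ.erase i).image bad).card ≤ (Finset.univ.erase i).card :=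
          Finset.card_image_le
      _ = r - 1 := by
          rw [Finset.card_erase_of_mem (Finset.mem_univ i), Finset.card_univ, Fintype.card_fin]
  have h3 : (r : Cardinal) ≤ ((r - 1 : ℕ) : Cardinal) :=
    le_trans hcard (le_trans h1 (by exact_mod_cast h2))
  have h4 : r ≤ r - 1 := by exact_mod_cast h3
  have h5 : 0 < r := i.pos
  omega

end Helpers
lemma key_lemma {𝔽 K : Type*} [Field 𝔽] [Field K] [Algebra 𝔽 K] {r : ℕ}
    {v : Fin r → K → WithTop ℤ} (hv : ∀ i, IsDVal 𝔽 K (v i))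
    {S : Set (K → WithTop ℤ)} (hS : ∀ w ∈ S, IsDVal 𝔽 K w)
    (hcard : (r : Cardinal) ≤ Cardinal.mk 𝔽)
    (i : Fin r) (m : Fin r → ℕ)
    (hmin : ∀ n ∈ Gamma v S, n i = m i → n ≤ m → n = m)
    (hmi : 0 < m i) (j₀ : Fin r) (hj₀i : j₀ ≠ i) (hj₀m : 0 < m j₀)
    (h₀ : K) (h₀ne : h₀ ≠ 0) (h₀A : h₀ ∈ regA S)
    (hvi : v i h₀ = ((-(m i : ℤ) : ℤ) : WithTop ℤ))
    (hall : ∀ j, ((-(m j : ℤ) : ℤ) : WithTop ℤ) ≤ v j h₀)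
    (hj₀ : ((-(m j₀ : ℤ) : ℤ) : WithTop ℤ) < v j₀ h₀) : False := by
  classical
  have hres : ∀ j : Fin r, ∃ c : 𝔽,
      (v j h₀ = 0 → 0 < v j (h₀ - algebraMap 𝔽 K c)) ∧ (0 < v j h₀ → c = 0) := by
    intro j
    by_cases hj : v j h₀ = 0
    · obtain ⟨a, _, ha2⟩ := (hv j).residue' hj
      exact ⟨a, fun _ => ha2, fun hc => absurd hj (ne_of_gt hc)⟩
    · exact ⟨0, fun hc => absurd hc hj, fun _ => rfl⟩
  choose a ha1 ha2 using hres
  obtain ⟨b, hb⟩ := exists_avoid hcard i (fun j => -(a j))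
  set h : K := h₀ + algebraMap 𝔽 K b with hh
  have hih0neg : v i h₀ < 0 := by
    rw [hvi]
    exact_mod_cast (by omega : -(m i : ℤ) < 0)
  have hcase : ∀ j, (v j h = v j h₀ ∧ v j h₀ < 0) ∨ (v j h = 0 ∧ 0 ≤ v j h₀) := by
    intro j
    rcases lt_trichotomy (v j h₀) 0 with hlt | heq | hgt
    · refine Or.inl ⟨?_, hlt⟩
      rw [hh, add_comm]
      exact (hv j).add_eq_right (lt_of_lt_of_le hlt ((hv j).val_algebraMap_nonneg b))
    · refine Or.inr ⟨?_, heq.ge⟩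
      have hji : j ≠ i := by
        intro e; subst e; rw [heq] at hih0neg; exact lt_irrefl _ hih0neg
      have hab : a j + b ≠ 0 := by
        intro hc
        exact hb j hji (eq_neg_of_add_eq_zero_right hc)
      have hc0 : v j (algebraMap 𝔽 K (a j + b)) = 0 := (hv j).trivial_on _ hab
      have hsplit : h = (h₀ - algebraMap 𝔽 K (a j)) + algebraMap 𝔽 K (a j + b) := by
        rw [hh, map_add]; ring
      rw [hsplit, (hv j).add_eq_right (by rw [hc0]; exact ha1 j heq)]
      exact hc0
    · refine Or.inr ⟨?_, hgt.le⟩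
      have hji : j ≠ i := by
        intro e; subst e; exact absurd hgt (not_lt.mpr hih0neg.le)
      have hbne : b ≠ 0 := by
        have := hb j hji
        rwa [ha2 j hgt, neg_zero] at this
      have hc0 : v j (algebraMap 𝔽 K b) = 0 := (hv j).trivial_on b hbne
      rw [hh, (hv j).add_eq_right (by rw [hc0]; exact hgt)]
      exact hc0
  have hA : h ∈ regA S := by
    intro w hw
    exact le_trans (le_min (h₀A w hw) ((hS w hw).val_algebraMap_nonneg b))
      ((hS w hw).add_ge _ _)
  have hhi : v i h = ((-(m i : ℤ) : ℤ) : WithTop ℤ) := by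
    rcases hcase i with ⟨he, _⟩ | ⟨_, hge⟩
    · rw [he, hvi]
    · exact absurd hge (not_le.mpr hih0neg)
  have hhne : h ≠ 0 := (hv i).ne_zero_of_val_eq hhi
  have hex : ∀ j, ∃ nj : ℕ, nj ≤ m j ∧ v j h = ((-(nj : ℤ) : ℤ) : WithTop ℤ) := by
    intro j
    rcases hcase j with ⟨he, hlt⟩ | ⟨he, _⟩
    · obtain ⟨z, hz⟩ := WithTop.ne_top_iff_exists.mp ((hv j).ne_top h₀ h₀ne)
      have hz0 : z < 0 := by rw [← hz] at hlt; exact_mod_cast hlt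
      have hzm : -(m j : ℤ) ≤ z := by
        have h5 := hall j; rw [← hz] at h5; exact_mod_cast h5
      refine ⟨(-z).toNat, by omega, ?_⟩
      rw [he, ← hz]
      congr 1
      omega
    · exact ⟨0, Nat.zero_le _, by rw [he]; norm_num⟩
  choose n hn1 hn2 using hex
  have hni : n i = m i := by
    have h5 := hn2 i
    rw [hhi] at h5
    have h6 : -(m i : ℤ) = -(n i : ℤ) := by exact_mod_cast h5
    omega
  have heqnm := hmin n ⟨h, hhne, hA, hn2⟩ hni (fun j => hn1 j)
  have hj₀h : ((-(m j₀ : ℤ) : ℤ) : WithTop ℤ) < v j₀ h := by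
    rcases hcase j₀ with ⟨he, _⟩ | ⟨he, _⟩
    · rw [he]; exact hj₀
    · rw [he]; exact_mod_cast (by omega : -(m j₀ : ℤ) < 0)
  rw [hn2 j₀] at hj₀h
  have h7 : -(m j₀ : ℤ) < -(n j₀ : ℤ) := by exact_mod_cast hj₀h
  rw [heqnm] at h7
  omega

lemma comb_lemma {𝔽 K : Type*} [Field 𝔽] [Field K] [Algebra 𝔽 K] {r : ℕ}
    {v : Fin r → K → WithTop ℤ} (hv : ∀ i, IsDVal 𝔽 K (v i))
    {S : Set (K → WithTop ℤ)} (hS : ∀ w ∈ S, IsDVal 𝔽 K w)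
    (hcard : (r : Cardinal) ≤ Cardinal.mk 𝔽)
    (i : Fin r) (m : Fin r → ℕ) (hm : m ∈ Gamma v S)
    (hmin : ∀ n ∈ Gamma v S, n i = m i → n ≤ m → n = m)
    (hmi : 0 < m i) (j₀ : Fin r) (hj₀i : j₀ ≠ i) (hj₀m : 0 < m j₀)
    (g : K) (gne : g ≠ 0) (gA : g ∈ regA S)
    (hgi : ((-(m i : ℤ) : ℤ) : WithTop ℤ) < v i g)
    (hgj : ∀ j, j ≠ i → v j g = ((-(m j : ℤ) : ℤ) : WithTop ℤ)) : False := by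
  obtain ⟨f, fne, fA, hf⟩ := hm
  have hginv : v j₀ g⁻¹ = ((m j₀ : ℤ) : WithTop ℤ) := by
    have h1 := (hv j₀).val_inv (hgj j₀ hj₀i)
    rwa [neg_neg] at h1
  have hu : v j₀ (f * g⁻¹) = 0 := by
    rw [(hv j₀).map_mul', hf j₀, hginv, ← WithTop.coe_add]
    norm_num
  obtain ⟨c, hcne, hcval⟩ := (hv j₀).residue' hu
  set cK : K := algebraMap 𝔽 K c with hcK
  have hfac : f - cK * g = (f * g⁻¹ - cK) * g := by field_simp
  have hvj₀ : ((-(m j₀ : ℤ) : ℤ) : WithTop ℤ) < v j₀ (f - cK * g) := by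
    rw [hfac, (hv j₀).map_mul', hgj j₀ hj₀i]
    exact withtop_lt_add_left hcval _
  have hvci : v i (cK * g) = v i g := (hv i).val_smul hcne g
  have hvi' : v i (f - cK * g) = ((-(m i : ℤ) : ℤ) : WithTop ℤ) := by
    have hlt : v i f < v i (-(cK * g)) := by
      rw [(hv i).val_neg, hvci, hf i]; exact hgi
    have h1 : v i (-(cK * g) + f) = v i f := (hv i).add_eq_right hlt
    rw [sub_eq_add_neg, add_comm, h1, hf i]
  have h₀ne : f - cK * g ≠ 0 := (hv i).ne_zero_of_val_eq hvi'
  have h₀A : f - cK * g ∈ regA S := by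
    intro w hw
    have h1 : 0 ≤ w (cK * g) := by
      rw [hcK, (hS w hw).val_smul hcne g]; exact gA w hw
    exact le_trans (le_min (fA w hw) h1) ((hS w hw).sub_ge f (cK * g))
  have hall : ∀ j, ((-(m j : ℤ) : ℤ) : WithTop ℤ) ≤ v j (f - cK * g) := by
    intro j
    have hg' : ((-(m j : ℤ) : ℤ) : WithTop ℤ) ≤ v j (cK * g) := by
      rw [(hv j).val_smul hcne g]
      by_cases hji : j = i
      · subst hji; exact hgi.le
      · exact (hgj j hji).ge
    exact le_trans (le_min (hf j).ge hg') ((hv j).sub_ge f (cK * g))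
  exact key_lemma hv hS hcard i m hmin hmi j₀ hj₀i hj₀m _ h₀ne h₀A hvi' hall hvj₀
theorem minimal_element_gives_gap (𝔽 K : Type*) [Field 𝔽] [Field K] [Algebra 𝔽 K] (r : ℕ) (hr : 1 ≤ r)
    (v : Fin r → K → WithTop ℤ) (hv : ∀ i, IsDVal 𝔽 K (v i))
    (hvd : ∀ i j : Fin r, i ≠ j → v i ≠ v j)
    (S : Set (K → WithTop ℤ)) (hS : ∀ w ∈ S, IsDVal 𝔽 K w)
    (hSv : ∀ w ∈ S, ∀ i, w ≠ v i)
    (hcard : (r : Cardinal) ≤ Cardinal.mk 𝔽) :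
    ∀ (i : Fin r) (m : Fin r → ℕ), m ∈ Gamma v S →
      (∀ n ∈ Gamma v S, n i = m i → n ≤ m → n = m) →
      0 < m i → (∃ j, j ≠ i ∧ 0 < m j) →
      Function.update m i 0 ∉ Gamma v S ∧
      IsLeast {n : ℕ | 1 ≤ n ∧ Function.update m i 0 + Pi.single i n ∈ Gamma v S} (m i) ∧
      m i ∉ GammaP v S i := by

  intro i m hm hmin hmi hj
  obtain ⟨j₀, hj₀i, hj₀m⟩ := hj
  have hupd : Function.update m i 0 + Pi.single i (m i) = m := by
    funext j
    by_cases hji : j = i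
    · subst hji; simp
    · simp [Function.update_of_ne hji, Pi.single_eq_of_ne hji]
  refine ⟨?_, ⟨⟨hmi, by rw [hupd]; exact hm⟩, ?_⟩, ?_⟩
  · intro hg
    obtain ⟨g, gne, gA, hgv⟩ := hg
    refine comb_lemma hv hS hcard i m hm hmin hmi j₀ hj₀i hj₀m g gne gA ?_ ?_
    · have h1 := hgv i
      rw [Function.update_self] at h1
      rw [h1]
      exact_mod_cast (by omega : -(m i : ℤ) < -((0 : ℕ) : ℤ))
    · intro j hji
      have h1 := hgv j
      rwa [Function.update_of_ne hji] at h1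
  · rintro nn ⟨hn1, hnG⟩
    by_contra hlt
    push_neg at hlt
    obtain ⟨g, gne, gA, hgv⟩ := hnG
    refine comb_lemma hv hS hcard i m hm hmin hmi j₀ hj₀i hj₀m g gne gA ?_ ?_
    · have h1 := hgv i
      simp only [Pi.add_apply, Function.update_self, Pi.single_eq_same, zero_add] at h1
      rw [h1]
      exact_mod_cast (by omega : -(m i : ℤ) < -(nn : ℤ))
    · intro j hji
      have h1 := hgv j
      simpa only [Pi.add_apply, Function.update_of_ne hji, Pi.single_eq_of_ne hji,
        add_zero] using h1
  · intro hg
    obtain ⟨g, gne, gA, hgi, hgj⟩ := hg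
    refine key_lemma hv hS hcard i m hmin hmi j₀ hj₀i hj₀m g gne gA hgi ?_ ?_
    · intro j
      by_cases hji : j = i
      · subst hji; exact hgi.ge
      · exact le_trans
          (by exact_mod_cast (by omega : -(m j : ℤ) ≤ 0) :
            ((-(m j : ℤ) : ℤ) : WithTop ℤ) ≤ 0) (hgj j hji)
    · exact lt_of_lt_of_le
        (by exact_mod_cast (by omega : -(m j₀ : ℤ) < 0)) (hgj j₀ hj₀i)
end

section
/- Assume 𝔽 has at least r elements, that for every i ∈ {1, …, r} and every gap m̄ ∈ ℕ^r ∖ Γ with m̄_i = 0 there exists n ≥ 1 with m̄ + nε_i ∈ Γ, and that for every i and every k ∈ ℕ there exists n ∈ Γ with n_i = k. For a gap m̄ ∈ ℕ^r ∖ Γ with m̄_i = 0 define φ_i(m̄) := min{n ∈ ℕ : n ≥ 1 and m̄ + nε_i ∈ Γ}. Then φ_i maps the set {m̄ ∈ ℕ^r ∖ Γ : m̄_i = 0} into the set of gaps at P_i, i.e. every value φ_i(m̄) lies in ℕ ∖ Γ_{P_i}, and φ_i is surjective onto ℕ ∖ Γ_{P_i}. -/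
section Helpers

variable {𝔽 K : Type*} [Field 𝔽] [Field K] [Algebra 𝔽 K] {v : K → WithTop ℤ}

lemma dval_one' (hv : IsDVal 𝔽 K v) : v 1 = 0 := by
  have h := hv.map_mul' 1 1
  rw [one_mul] at h
  have hne := hv.ne_top 1 one_ne_zero
  obtain ⟨n, hn⟩ := WithTop.ne_top_iff_exists.mp hne
  rw [← hn] at h ⊢
  rw [← WithTop.coe_add, WithTop.coe_eq_coe] at h
  norm_cast
  omega

lemma dval_neg (hv : IsDVal 𝔽 K v) (f : K) : v (-f) = v f := by
  have h1 : v (-1 : K) = 0 := by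
    have h := hv.map_mul' (-1) (-1)
    rw [neg_mul_neg, one_mul, dval_one' hv] at h
    have hne := hv.ne_top (-1) (by norm_num)
    obtain ⟨n, hn⟩ := WithTop.ne_top_iff_exists.mp hne
    rw [← hn]
    rw [← hn, ← WithTop.coe_add] at h
    have : n + n = 0 := by exact_mod_cast h.symm
    have : n = 0 := by omega
    simp [this]
  calc v (-f) = v ((-1) * f) := by rw [neg_one_mul]
  _ = v (-1 : K) + v f := hv.map_mul' _ _
  _ = v f := by rw [h1, zero_add]

lemma dval_add_eq_left (hv : IsDVal 𝔽 K v) {f g : K} (hlt : v f < v g) : v (f + g) = v f := by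
  refine le_antisymm ?_ ?_
  · have key : min (v (f + g)) (v g) ≤ v f := by
      have e : (f + g) + -g = f := by ring
      calc min (v (f + g)) (v g) = min (v (f + g)) (v (-g)) := by rw [dval_neg hv]
      _ ≤ v ((f + g) + -g) := hv.add_ge _ _
      _ = v f := by rw [e]
    rcases le_total (v (f + g)) (v g) with h | h
    · rwa [min_eq_left h] at key
    · rw [min_eq_right h] at key; exact absurd hlt (not_lt.mpr key)
  · calc v f = min (v f) (v g) := (min_eq_left hlt.le).symm
    _ ≤ v (f + g) := hv.add_ge f g

lemma dval_sub_eq_left (hv : IsDVal 𝔽 K v) {f g : K} (hlt : v f < v g) : v (f - g) = v f := by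
  rw [sub_eq_add_neg, dval_add_eq_left hv (by rwa [dval_neg hv])]

lemma dval_algebraMap_nonneg (hv : IsDVal 𝔽 K v) (a : 𝔽) : 0 ≤ v (algebraMap 𝔽 K a) := by
  rcases eq_or_ne a 0 with h | h
  · rw [h, map_zero, hv.map_zero']; exact le_top
  · rw [hv.trivial_on a h]

lemma dval_le_const_mul (hv : IsDVal 𝔽 K v) (a : 𝔽) (g : K) :
    v g ≤ v (algebraMap 𝔽 K a * g) := by
  rcases eq_or_ne a 0 with h | h
  · rw [h, map_zero, zero_mul, hv.map_zero']; exact le_top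
  · rw [hv.map_mul', hv.trivial_on a h, zero_add]

lemma dval_exists_sub (hv : IsDVal 𝔽 K v) {f g : K} (hg : g ≠ 0) (hfg : v f = v g) :
    ∃ a : 𝔽, v g < v (f - algebraMap 𝔽 K a * g) := by
  have hgt := hv.ne_top g hg
  have hq : v (f * g⁻¹) = 0 := by
    rw [hv.map_mul', hfg, ← hv.map_mul', mul_inv_cancel₀ hg, dval_one' hv]
  obtain ⟨a, ha⟩ := hv.residue _ hq.ge
  refine ⟨a, ?_⟩
  have e : f - algebraMap 𝔽 K a * g = (f * g⁻¹ - algebraMap 𝔽 K a) * g := by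
    field_simp
  rw [e, hv.map_mul']
  obtain ⟨n, hn⟩ := WithTop.ne_top_iff_exists.mp hgt
  rw [← hn]
  rcases eq_or_ne (v (f * g⁻¹ - algebraMap 𝔽 K a)) ⊤ with htop | htop
  · rw [htop, top_add]; exact WithTop.coe_lt_top n
  · obtain ⟨m, hm⟩ := WithTop.ne_top_iff_exists.mp htop
    rw [← hm, ← WithTop.coe_add, WithTop.coe_lt_coe]
    have hm0 : (0 : ℤ) < m := by
      rw [← hm] at ha; exact_mod_cast ha
    omega

lemma one_mem_regA {S : Set (K → WithTop ℤ)} (hS : ∀ w ∈ S, IsDVal 𝔽 K w) :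
    (1 : K) ∈ regA S := fun w hw => (dval_one' (hS w hw)).ge

lemma sub_const_mul_mem_regA {S : Set (K → WithTop ℤ)} (hS : ∀ w ∈ S, IsDVal 𝔽 K w)
    {f g : K} (hf : f ∈ regA S) (hg : g ∈ regA S) (a : 𝔽) :
    f - algebraMap 𝔽 K a * g ∈ regA S := by
  intro w hw
  have h1 : 0 ≤ w (algebraMap 𝔽 K a * g) :=
    le_trans (hg w hw) (dval_le_const_mul (hS w hw) a g)
  calc (0 : WithTop ℤ) ≤ min (w f) (w (-(algebraMap 𝔽 K a * g))) := by
        rw [dval_neg (hS w hw)]; exact le_min (hf w hw) h1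
  _ ≤ w (f + -(algebraMap 𝔽 K a * g)) := (hS w hw).add_ge _ _
  _ = w (f - algebraMap 𝔽 K a * g) := by rw [← sub_eq_add_neg]

lemma add_const_mem_regA {S : Set (K → WithTop ℤ)} (hS : ∀ w ∈ S, IsDVal 𝔽 K w)
    {f : K} (hf : f ∈ regA S) (a : 𝔽) : f + algebraMap 𝔽 K a ∈ regA S := by
  intro w hw
  calc (0 : WithTop ℤ) ≤ min (w f) (w (algebraMap 𝔽 K a)) :=
        le_min (hf w hw) (dval_algebraMap_nonneg (hS w hw) a)
  _ ≤ w (f + algebraMap 𝔽 K a) := (hS w hw).add_ge _ _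

end Helpers

section Helpers2

variable {𝔽 K : Type*} [Field 𝔽] [Field K] [Algebra 𝔽 K] {r : ℕ}

lemma zero_mem_Gamma (v : Fin r → K → WithTop ℤ) (hv : ∀ i, IsDVal 𝔽 K (v i))
    {S : Set (K → WithTop ℤ)} (hS : ∀ w ∈ S, IsDVal 𝔽 K w) :
    (0 : Fin r → ℕ) ∈ Gamma v S := by
  refine ⟨1, one_ne_zero, one_mem_regA hS, fun i => ?_⟩
  rw [dval_one' (hv i)]
  simp

lemma zero_mem_GammaP (v : Fin r → K → WithTop ℤ) (hv : ∀ i, IsDVal 𝔽 K (v i))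
    {S : Set (K → WithTop ℤ)} (hS : ∀ w ∈ S, IsDVal 𝔽 K w) (i : Fin r) :
    (0 : ℕ) ∈ GammaP v S i := by
  refine ⟨1, one_ne_zero, one_mem_regA hS, ?_, fun j _ => (dval_one' (hv j)).ge⟩
  rw [dval_one' (hv i)]
  simp

lemma exists_not_mem_finset (hcard : (r : Cardinal) ≤ Cardinal.mk 𝔽) (B : Finset 𝔽)
    (hB : B.card < r) : ∃ c : 𝔽, c ∉ B := by
  by_contra hall
  push_neg at hall
  have hsub : (Set.univ : Set 𝔽) ⊆ ↑B := fun c _ => hall c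
  have h1 : Cardinal.mk 𝔽 ≤ (B.card : Cardinal) := by
    calc Cardinal.mk 𝔽 = Cardinal.mk (Set.univ : Set 𝔽) := Cardinal.mk_univ.symm
    _ ≤ Cardinal.mk (↑B : Set 𝔽) := Cardinal.mk_le_mk_of_subset hsub
    _ = (B.card : Cardinal) := Cardinal.mk_coe_finset
  have h2 : (r : Cardinal) < (r : Cardinal) :=
    lt_of_le_of_lt (hcard.trans h1) (by exact_mod_cast hB)
  exact lt_irrefl _ h2

lemma exists_gamma (v : Fin r → K → WithTop ℤ) (hv : ∀ i, IsDVal 𝔽 K (v i))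
    {S : Set (K → WithTop ℤ)} (hS : ∀ w ∈ S, IsDVal 𝔽 K w)
    (hcard : (r : Cardinal) ≤ Cardinal.mk 𝔽)
    {h : K} (hh0 : h ≠ 0) (hhA : h ∈ regA S) (j₀ : Fin r) (hj₀ : v j₀ h < 0) :
    ∃ m' : Fin r → ℕ, m' ∈ Gamma v S ∧
      ∀ j, (v j h < 0 → v j h = ((-(m' j : ℤ) : ℤ) : WithTop ℤ)) ∧
           (0 ≤ v j h → m' j = 0) := by
  classical
  -- residues
  have hres : ∀ j : Fin r, ∃ a : 𝔽, 0 ≤ v j h → 0 < v j (h - algebraMap 𝔽 K a) := by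
    intro j
    by_cases hj : 0 ≤ v j h
    · obtain ⟨a, ha⟩ := (hv j).residue h hj
      exact ⟨a, fun _ => ha⟩
    · exact ⟨0, fun h' => absurd h' hj⟩
  choose a ha using hres
  have hBcard : ((Finset.univ.erase j₀).image (fun j => -(a j))).card < r := by
    refine lt_of_le_of_lt Finset.card_image_le ?_
    rw [Finset.card_erase_of_mem (Finset.mem_univ j₀), Finset.card_univ, Fintype.card_fin]
    have := j₀.pos
    omega
  obtain ⟨c, hc⟩ := exists_not_mem_finset hcard _ hBcard
  set h' : K := h + algebraMap 𝔽 K c with hh'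
  have key : ∀ j : Fin r, (v j h < 0 → v j h' = v j h) ∧ (0 ≤ v j h → v j h' = 0) := by
    intro j
    constructor
    · intro hneg
      exact dval_add_eq_left (hv j) (lt_of_lt_of_le hneg (dval_algebraMap_nonneg (hv j) c))
    · intro hpos
      have hji : j ≠ j₀ := by rintro rfl; exact absurd hpos (not_le.mpr hj₀)
      have hac : a j + c ≠ 0 := by
        intro hzero
        refine hc (Finset.mem_image.mpr ⟨j, Finset.mem_erase.mpr ⟨hji, Finset.mem_univ j⟩, ?_⟩)
        rw [neg_eq_iff_add_eq_zero]
        exact hzero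
      have h1 : 0 < v j (h - algebraMap 𝔽 K (a j)) := ha j hpos
      have h2 : v j (algebraMap 𝔽 K (a j + c)) = 0 := (hv j).trivial_on _ hac
      have e : h' = algebraMap 𝔽 K (a j + c) + (h - algebraMap 𝔽 K (a j)) := by
        rw [hh', map_add]; ring
      rw [e, dval_add_eq_left (hv j) (by rw [h2]; exact h1), h2]
  have hne' : h' ≠ 0 := by
    intro h0
    have hk := (key j₀).1 hj₀
    rw [h0, (hv j₀).map_zero'] at hk
    rw [← hk] at hj₀
    exact absurd hj₀ not_top_lt
  set e : Fin r → ℤ := fun j => (v j h).untop ((hv j).ne_top h hh0) with he'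
  have he : ∀ j, (e j : WithTop ℤ) = v j h := fun j => WithTop.coe_untop _ _
  set m' : Fin r → ℕ := fun j => (-(e j)).toNat with hm'
  have hspec : ∀ j, (v j h < 0 → v j h = ((-(m' j : ℤ) : ℤ) : WithTop ℤ)) ∧
      (0 ≤ v j h → m' j = 0) := by
    intro j
    constructor
    · intro hneg
      rw [← he j] at hneg ⊢
      have hneg' : e j < 0 := by exact_mod_cast hneg
      rw [WithTop.coe_eq_coe, hm']
      simp only
      rw [Int.toNat_of_nonneg (by omega)]
      omega
    · intro hpos
      rw [← he j] at hpos
      have hpos' : 0 ≤ e j := by exact_mod_cast hpos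
      rw [hm']
      simp only
      omega
  refine ⟨m', ⟨h', hne', add_const_mem_regA hS hhA c, fun j => ?_⟩, hspec⟩
  rcases lt_or_ge (v j h) 0 with hj | hj
  · rw [(key j).1 hj, (hspec j).1 hj]
  · rw [(key j).2 hj, (hspec j).2 hj]
    simp

end Helpers2

theorem phi_maps_onto_gaps (𝔽 K : Type*) [Field 𝔽] [Field K] [Algebra 𝔽 K] (r : ℕ) (hr : 1 ≤ r)
    (v : Fin r → K → WithTop ℤ) (hv : ∀ i, IsDVal 𝔽 K (v i))
    (hvd : ∀ i j : Fin r, i ≠ j → v i ≠ v j)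
    (S : Set (K → WithTop ℤ)) (hS : ∀ w ∈ S, IsDVal 𝔽 K w)
    (hSv : ∀ w ∈ S, ∀ i, w ≠ v i)
    (hcard : (r : Cardinal) ≤ Cardinal.mk 𝔽)
    (h1 : ∀ (i : Fin r) (mbar : Fin r → ℕ), mbar ∉ Gamma v S → mbar i = 0 →
      ∃ n : ℕ, 1 ≤ n ∧ mbar + Pi.single i n ∈ Gamma v S)
    (h2 : ∀ (i : Fin r) (k : ℕ), ∃ n ∈ Gamma v S, n i = k)
    (φ : Fin r → (Fin r → ℕ) → ℕ)
    (hφ : ∀ (i : Fin r) (mbar : Fin r → ℕ), mbar ∉ Gamma v S → mbar i = 0 →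
      IsLeast {n : ℕ | 1 ≤ n ∧ mbar + Pi.single i n ∈ Gamma v S} (φ i mbar)) :
    (∀ (i : Fin r) (mbar : Fin r → ℕ), mbar ∉ Gamma v S → mbar i = 0 →
      φ i mbar ∉ GammaP v S i) ∧
    ∀ (i : Fin r) (k : ℕ), k ∉ GammaP v S i →
      ∃ mbar : Fin r → ℕ, mbar ∉ Gamma v S ∧ mbar i = 0 ∧ φ i mbar = k := by
  classical
  constructor
  · -- Part 1
    intro i mbar hm hm0 hP
    obtain ⟨⟨hn1, hmem⟩, hlb⟩ := hφ i mbar hm hm0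
    set n := φ i mbar with hn
    obtain ⟨f, hf0, hfA, hfv⟩ := hmem
    obtain ⟨g, hg0, hgA, hgi, hgj⟩ := hP
    have hfi : v i f = ((-(n : ℤ) : ℤ) : WithTop ℤ) := by
      have e : (mbar + Pi.single i n : Fin r → ℕ) i = n := by simp [hm0]
      have := hfv i
      rwa [e] at this
    have hfvj : ∀ j, j ≠ i → v j f = ((-(mbar j : ℤ) : ℤ) : WithTop ℤ) := by
      intro j hj
      have e : (mbar + Pi.single i n : Fin r → ℕ) j = mbar j := by simp [Pi.single_eq_of_ne hj]
      have := hfv j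
      rwa [e] at this
    have hfg : v i f = v i g := by rw [hfi, hgi]
    obtain ⟨a, ha⟩ := dval_exists_sub (hv i) hg0 hfg
    set h := f - algebraMap 𝔽 K a * g with hh
    have hhi : ((-(n : ℤ) : ℤ) : WithTop ℤ) < v i h := by rw [← hgi]; exact ha
    have hhA : h ∈ regA S := sub_const_mul_mem_regA hS hfA hgA a
    have hneg : ∀ j, j ≠ i → 0 < mbar j → v j h = ((-(mbar j : ℤ) : ℤ) : WithTop ℤ) := by
      intro j hj hpos
      rw [hh, dval_sub_eq_left (hv j) ?_]
      · exact hfvj j hj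
      · rw [hfvj j hj]
        refine lt_of_lt_of_le ?_ (le_trans (hgj j hj) (dval_le_const_mul (hv j) a g))
        exact_mod_cast (by omega : -(mbar j : ℤ) < 0)
    have hge : ∀ j, j ≠ i → mbar j = 0 → 0 ≤ v j h := by
      intro j hj h0
      have hf1 : 0 ≤ v j f := by
        rw [hfvj j hj, h0]; simp
      have hg2 : 0 ≤ v j (algebraMap 𝔽 K a * g) :=
        le_trans (hgj j hj) (dval_le_const_mul (hv j) a g)
      calc (0 : WithTop ℤ) ≤ min (v j f) (v j (-(algebraMap 𝔽 K a * g))) := by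
            rw [dval_neg (hv j)]; exact le_min hf1 hg2
      _ ≤ v j (f + -(algebraMap 𝔽 K a * g)) := (hv j).add_ge _ _
      _ = v j h := by rw [hh, ← sub_eq_add_neg]
    by_cases hex : ∀ j, 0 ≤ v j h
    · have hzero : mbar = 0 := by
        funext j
        by_cases hj : j = i
        · rw [hj, hm0]; rfl
        · by_contra hne
          have hpos : 0 < mbar j := Nat.pos_of_ne_zero (by simpa using hne)
          have h5 := hneg j hj hpos
          have h4 := hex j
          rw [h5] at h4
          have : (0 : ℤ) ≤ -(mbar j : ℤ) := by exact_mod_cast h4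
          omega
      exact hm (hzero ▸ zero_mem_Gamma v hv hS)
    · push_neg at hex
      obtain ⟨j₁, hj₁⟩ := hex
      have hh0 : h ≠ 0 := by
        intro h0
        rw [h0, (hv j₁).map_zero'] at hj₁
        exact absurd hj₁ not_top_lt
      obtain ⟨m', hm'Γ, hspec⟩ := exists_gamma v hv hS hcard hh0 hhA j₁ hj₁
      have hmj : ∀ j, j ≠ i → m' j = mbar j := by
        intro j hj
        rcases Nat.eq_zero_or_pos (mbar j) with h0 | hpos
        · rw [(hspec j).2 (hge j hj h0), h0]
        · have h5 := hneg j hj hpos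
          have hvneg : v j h < 0 := by
            rw [h5]; exact_mod_cast (by omega : -(mbar j : ℤ) < 0)
          have h6 := (hspec j).1 hvneg
          rw [h5] at h6
          have : -(mbar j : ℤ) = -(m' j : ℤ) := by exact_mod_cast h6
          omega
      have hform : m' = mbar + Pi.single i (m' i) := by
        funext j
        by_cases hj : j = i
        · subst hj; simp [hm0]
        · simp [Pi.single_eq_of_ne hj, hmj j hj]
      have hti : m' i < n := by
        rcases lt_or_ge (v i h) 0 with hneg' | hpos'
        · have h6 := (hspec i).1 hneg'
          rw [h6] at hhi
          have : -(n : ℤ) < -(m' i : ℤ) := by exact_mod_cast hhi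
          omega
        · rw [(hspec i).2 hpos']; omega
      rcases Nat.eq_zero_or_pos (m' i) with h0 | hpos
      · rw [h0] at hform
        simp only [Pi.single_zero, add_zero] at hform
        exact hm (hform ▸ hm'Γ)
      · have := hlb ⟨hpos, hform ▸ hm'Γ⟩
        omega
  · -- Part 2
    intro i k hk
    have hk1 : 1 ≤ k := Nat.one_le_iff_ne_zero.mpr (by
      rintro rfl; exact hk (zero_mem_GammaP v hv hS i))
    set Tset : Set ℕ := {t | ∃ m, m ∈ Gamma v S ∧ m i = k ∧ ∑ j, m j = t} with hT
    have hTne : Tset.Nonempty := by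
      obtain ⟨m, hm, hmi⟩ := h2 i k
      exact ⟨_, m, hm, hmi, rfl⟩
    obtain ⟨m, hmΓ, hmi, hmsum⟩ := Nat.sInf_mem hTne
    have hj₀ex : ∃ j₀, j₀ ≠ i ∧ 0 < m j₀ := by
      by_contra hcon
      push_neg at hcon
      obtain ⟨f, hf0, hfA, hfv⟩ := hmΓ
      refine hk ⟨f, hf0, hfA, by rw [hfv i, hmi], fun j hj => ?_⟩
      rw [hfv j, Nat.le_zero.mp (hcon j hj)]
      simp
    obtain ⟨j₀, hj₀i, hj₀pos⟩ := hj₀ex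
    set mbar : Fin r → ℕ := fun j => if j = i then 0 else m j with hmbar
    have hupd : ∀ t, mbar + Pi.single i t = fun j => if j = i then t else m j := by
      intro t
      funext j
      by_cases hj : j = i
      · subst hj; simp [hmbar]
      · simp [hmbar, hj, Pi.single_eq_of_ne hj]
    have hclaim : ∀ t, t < k → mbar + Pi.single i t ∉ Gamma v S := by
      intro t ht hmem
      rw [hupd t] at hmem
      obtain ⟨g, hg0, hgA, hgv⟩ := hmem
      have hgi : v i g = ((-(t : ℤ) : ℤ) : WithTop ℤ) := by simpa using hgv i
      have hgj : ∀ j, j ≠ i → v j g = ((-(m j : ℤ) : ℤ) : WithTop ℤ) := by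
        intro j hj
        simpa [hj] using hgv j
      obtain ⟨f, hf0, hfA, hfv⟩ := hmΓ
      have hfg : v j₀ f = v j₀ g := by rw [hfv j₀, hgj j₀ hj₀i]
      obtain ⟨a, ha⟩ := dval_exists_sub (hv j₀) hg0 hfg
      set h := f - algebraMap 𝔽 K a * g with hh
      have hhA : h ∈ regA S := sub_const_mul_mem_regA hS hfA hgA a
      have hhi : v i h = ((-(k : ℤ) : ℤ) : WithTop ℤ) := by
        rw [hh, dval_sub_eq_left (hv i) ?_]
        · rw [hfv i, hmi]
        · rw [hfv i, hmi]
          refine lt_of_lt_of_le ?_ (dval_le_const_mul (hv i) a g)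
          rw [hgi]
          exact_mod_cast (by omega : -(k : ℤ) < -(t : ℤ))
      have hh0 : h ≠ 0 := by
        intro h0
        rw [h0, (hv i).map_zero'] at hhi
        exact WithTop.coe_ne_top hhi.symm
      have hhneg : v i h < 0 := by
        rw [hhi]; exact_mod_cast (by omega : -(k : ℤ) < 0)
      have hge : ∀ j, ((-(m j : ℤ) : ℤ) : WithTop ℤ) ≤ v j h := by
        intro j
        by_cases hj : j = i
        · subst hj; rw [hhi, hmi]
        · have hf1 : ((-(m j : ℤ) : ℤ) : WithTop ℤ) ≤ v j f := (hfv j).ge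
          have hg2 : ((-(m j : ℤ) : ℤ) : WithTop ℤ) ≤ v j (algebraMap 𝔽 K a * g) :=
            le_trans (hgj j hj).ge (dval_le_const_mul (hv j) a g)
          calc ((-(m j : ℤ) : ℤ) : WithTop ℤ)
              ≤ min (v j f) (v j (-(algebraMap 𝔽 K a * g))) := by
                rw [dval_neg (hv j)]; exact le_min hf1 hg2
          _ ≤ v j (f + -(algebraMap 𝔽 K a * g)) := (hv j).add_ge _ _
          _ = v j h := by rw [hh, ← sub_eq_add_neg]
      have hj₀h : ((-(m j₀ : ℤ) : ℤ) : WithTop ℤ) < v j₀ h := by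
        rw [← hgj j₀ hj₀i]; exact ha
      obtain ⟨m', hm'Γ, hspec⟩ := exists_gamma v hv hS hcard hh0 hhA i hhneg
      have hm'i : m' i = k := by
        have h6 := (hspec i).1 hhneg
        rw [hhi] at h6
        have : -(k : ℤ) = -(m' i : ℤ) := by exact_mod_cast h6
        omega
      have hle : ∀ j, m' j ≤ m j := by
        intro j
        rcases lt_or_ge (v j h) 0 with hneg' | hpos'
        · have h6 := (hspec j).1 hneg'
          have h7 := hge j
          rw [h6] at h7
          have : -(m j : ℤ) ≤ -(m' j : ℤ) := by exact_mod_cast h7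
          omega
        · rw [(hspec j).2 hpos']; omega
      have hlt : m' j₀ < m j₀ := by
        rcases lt_or_ge (v j₀ h) 0 with hneg' | hpos'
        · have h6 := (hspec j₀).1 hneg'
          rw [h6] at hj₀h
          have : -(m j₀ : ℤ) < -(m' j₀ : ℤ) := by exact_mod_cast hj₀h
          omega
        · rw [(hspec j₀).2 hpos']; omega
      have hsum : ∑ j, m' j < ∑ j, m j :=
        Finset.sum_lt_sum (fun j _ => hle j) ⟨j₀, Finset.mem_univ _, hlt⟩
      have hinf : sInf Tset ≤ ∑ j, m' j := Nat.sInf_le ⟨m', hm'Γ, hm'i, rfl⟩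
      omega
    have hmbar_not : mbar ∉ Gamma v S := by
      have := hclaim 0 (by omega)
      simpa using this
    have hmbari : mbar i = 0 := by simp [hmbar]
    refine ⟨mbar, hmbar_not, hmbari, ?_⟩
    obtain ⟨⟨hp1, hpmem⟩, hlb⟩ := hφ i mbar hmbar_not hmbari
    have hkmem : mbar + Pi.single i k ∈ Gamma v S := by
      rw [hupd k]
      have he : (fun j => if j = i then k else m j) = m := by
        funext j
        by_cases hj : j = i
        · subst hj; simp [hmi]
        · simp [hj]
      rw [he]
      exact hmΓ
    have hle' : φ i mbar ≤ k := hlb ⟨hk1, hkmem⟩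
    rcases Nat.lt_or_ge (φ i mbar) k with hlt | hge
    · exact absurd hpmem (hclaim _ hlt)
    · omega
end
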